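/- arXiv:1607.03594 — 5 statements merged into one kernel-verified Lean document; each statement's English description precedes it below -/
import Mathlib

section
/- Let ℓ : {0,1} × [0,1] → ℝ be a proper loss bounded by B. Let S be a nonempty finite index set, let y_t ∈ {0,1} for t ∈ S, let n = |S| and ρ = (Σ_{t∈S} y_t)/n be the empirical frequency of 1s. Then for all r, q ∈ [0,1]: Σ_{t∈S} (ℓ(y_t, r) − ℓ(y_t, q)) ≤ 2·B·n·|ρ − r|. -/
/-!
Write `L(p, c) = p ℓ(1, c) + (1 - p) ℓ(0, c)` for the expected loss of the prediction `c` when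
the outcome is `1` with probability `p`. The total loss of `c` on `S` is `n L(ρ, c)`, and
`L(ρ, r) - L(ρ, q)` is affine in `ρ` with slope `(ℓ(1,r) - ℓ(1,q)) - (ℓ(0,r) - ℓ(0,q))`, which
lies in `[-2B, 2B]`. At `ρ = r` properness makes it nonpositive, so at `ρ` it is at most
`2B |ρ - r|`.
-/

open Finset

def expectedLoss (ℓ : ℝ → ℝ → ℝ) (p c : ℝ) : ℝ :=
  p * ℓ 1 c + (1 - p) * ℓ 0 c

theorem expectedLoss_sub_expectedLoss (ℓ : ℝ → ℝ → ℝ) (p r q : ℝ) :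
    expectedLoss ℓ p r - expectedLoss ℓ p q =
      (expectedLoss ℓ r r - expectedLoss ℓ r q) +
        (p - r) * ((ℓ 1 r - ℓ 1 q) - (ℓ 0 r - ℓ 0 q)) := by
  unfold expectedLoss
  ring

theorem expectedLoss_sub_le {ℓ : ℝ → ℝ → ℝ} {B r q : ℝ}
    (hproper : expectedLoss ℓ r r ≤ expectedLoss ℓ r q)
    (hbound : ∀ y' ∈ ({0, 1} : Set ℝ), ∀ c ∈ Set.Icc (0:ℝ) 1, 0 ≤ ℓ y' c ∧ ℓ y' c ≤ B)
    (hr : r ∈ Set.Icc (0:ℝ) 1) (hq : q ∈ Set.Icc (0:ℝ) 1) (p : ℝ) :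
    expectedLoss ℓ p r - expectedLoss ℓ p q ≤ 2 * B * |p - r| := by
  have hslope : |(ℓ 1 r - ℓ 1 q) - (ℓ 0 r - ℓ 0 q)| ≤ 2 * B := by
    have h1r := hbound 1 (by simp) r hr
    have h0r := hbound 0 (by simp) r hr
    have h1q := hbound 1 (by simp) q hq
    have h0q := hbound 0 (by simp) q hq
    rw [abs_le]
    constructor <;> linarith
  calc expectedLoss ℓ p r - expectedLoss ℓ p q
      = (expectedLoss ℓ r r - expectedLoss ℓ r q) +
          (p - r) * ((ℓ 1 r - ℓ 1 q) - (ℓ 0 r - ℓ 0 q)) :=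
        expectedLoss_sub_expectedLoss ℓ p r q
    _ ≤ 0 + |p - r| * (2 * B) := by
        refine add_le_add (by linarith) ((le_abs_self _).trans ?_)
        rw [abs_mul]
        exact mul_le_mul_of_nonneg_left hslope (abs_nonneg _)
    _ = 2 * B * |p - r| := by ring

theorem sum_comp_of_binary {α : Type*} {S : Finset α} {y : α → ℝ}
    (hy : ∀ t ∈ S, y t = 0 ∨ y t = 1) (f : ℝ → ℝ) :
    ∑ t ∈ S, f (y t) = (∑ t ∈ S, y t) * f 1 + (#S - ∑ t ∈ S, y t) * f 0 := by
  have hpoint : ∀ t ∈ S, f (y t) = y t * f 1 + (1 - y t) * f 0 := by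
    intro t ht
    rcases hy t ht with h | h <;> simp [h]
  rw [sum_congr rfl hpoint, sum_add_distrib, ← sum_mul, ← sum_mul, sum_sub_distrib]
  simp

theorem sum_loss_eq_card_mul_expectedLoss {α : Type*} {S : Finset α} {y : α → ℝ}
    (hy : ∀ t ∈ S, y t = 0 ∨ y t = 1) (ℓ : ℝ → ℝ → ℝ) (c : ℝ) :
    ∑ t ∈ S, ℓ (y t) c = #S * expectedLoss ℓ ((∑ t ∈ S, y t) / #S) c := by
  rcases S.eq_empty_or_nonempty with rfl | hS
  · simp
  have hcard : (#S : ℝ) ≠ 0 := by exact_mod_cast hS.card_pos.ne'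
  rw [sum_comp_of_binary hy (ℓ · c), expectedLoss]
  field_simp

theorem stmt0_general {α : Type*} (S : Finset α)
    (y : α → ℝ) (hy : ∀ t ∈ S, y t = 0 ∨ y t = 1)
    (ℓ : ℝ → ℝ → ℝ) (B : ℝ)
    (hproper : ∀ p ∈ Set.Icc (0:ℝ) 1, ∀ q ∈ Set.Icc (0:ℝ) 1,
      p * ℓ 1 p + (1 - p) * ℓ 0 p ≤ p * ℓ 1 q + (1 - p) * ℓ 0 q)
    (hbound : ∀ y' ∈ ({0, 1} : Set ℝ), ∀ q ∈ Set.Icc (0:ℝ) 1,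
      0 ≤ ℓ y' q ∧ ℓ y' q ≤ B)
    (ρ : ℝ) (hρ : ρ = (∑ t ∈ S, y t) / (S.card : ℝ)) :
    ∀ r ∈ Set.Icc (0:ℝ) 1, ∀ q ∈ Set.Icc (0:ℝ) 1,
      ∑ t ∈ S, (ℓ (y t) r - ℓ (y t) q) ≤ 2 * B * (S.card : ℝ) * |ρ - r| := by
  intro r hr q hq
  have hregret := expectedLoss_sub_le (hproper r hr q hq) hbound hr hq ρ
  calc ∑ t ∈ S, (ℓ (y t) r - ℓ (y t) q)
      = #S * (expectedLoss ℓ ρ r - expectedLoss ℓ ρ q) := by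
        rw [sum_sub_distrib, sum_loss_eq_card_mul_expectedLoss hy, ← hρ,
          sum_loss_eq_card_mul_expectedLoss hy, ← hρ, mul_sub]
    _ ≤ #S * (2 * B * |ρ - r|) := by gcongr
    _ = 2 * B * (S.card : ℝ) * |ρ - r| := by ring

/-- For a proper loss `ℓ` bounded by `B`, a nonempty finite index set `S`
with binary outcomes `y t ∈ {0,1}` and empirical frequency `ρ`, any two predictions
`r, q ∈ [0,1]` satisfy `∑_{t∈S} (ℓ(y_t, r) − ℓ(y_t, q)) ≤ 2·B·|S|·|ρ − r|`. -/
theorem stmt0 {α : Type*} (S : Finset α) (hS : S.Nonempty)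
    (y : α → ℝ) (hy : ∀ t ∈ S, y t = 0 ∨ y t = 1)
    (ℓ : ℝ → ℝ → ℝ) (B : ℝ)
    (hproper : ∀ p ∈ Set.Icc (0:ℝ) 1, ∀ q ∈ Set.Icc (0:ℝ) 1,
      p * ℓ 1 p + (1 - p) * ℓ 0 p ≤ p * ℓ 1 q + (1 - p) * ℓ 0 q)
    (hbound : ∀ y' ∈ ({0, 1} : Set ℝ), ∀ q ∈ Set.Icc (0:ℝ) 1,
      0 ≤ ℓ y' q ∧ ℓ y' q ≤ B)
    (ρ : ℝ) (hρ : ρ = (∑ t ∈ S, y t) / (S.card : ℝ)) :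
    ∀ r ∈ Set.Icc (0:ℝ) 1, ∀ q ∈ Set.Icc (0:ℝ) 1,
      ∑ t ∈ S, (ℓ (y t) r - ℓ (y t) q) ≤ 2 * B * (S.card : ℝ) * |ρ - r| :=
  stmt0_general S y hy ℓ B hproper hbound ρ hρ
end

section
/- Let ℓ : {0,1} × [0,1] → ℝ be a proper loss bounded by B, let N ≥ 1, and let y_1,…,y_T ∈ {0,1} be outcomes with forecasts p_1,…,p_T taking values in the grid G_N = {i/N : i = 0,…,N}. Then the internal regret satisfies, for every pair i, j ∈ {0,…,N}: Σ_{t : p_t = i/N} (ℓ(y_t, i/N) − ℓ(y_t, j/N)) ≤ 2·B·T·C_T^1, where C_T^1 is the ℓ1 calibration error of the forecasts. -/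
/-!
On the bin `S = {t : p_t = α}`, write each outcome as `y_t = α + (y_t - α)`. Since the loss
is affine in `y ∈ {0,1}`, the regret of `α` against `β` on `S` splits as `|S|` times the
expected regret of `α` under `Bernoulli(α)`, which is `≤ 0` by properness, plus the bin's bias
`∑_{t ∈ S} (y_t - α)` times a loss difference of size at most `2B`. The bias of a single bin
is at most the sum of all the bin biases, i.e. `T · C_T^1`.
-/

open scoped BigOperators Classical

/-- The ℓ1 calibration error `C_T^1 = (1/T) · ∑_{i=0}^N |∑_{t : p_t = i/N} (y_t − i/N)|`
of forecasts `p` against outcomes `y`. -/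
noncomputable def calErrL1 (T N : ℕ) (p y : Fin T → ℝ) : ℝ :=
  (1 / (T : ℝ)) * ∑ i ∈ Finset.range (N + 1),
    |∑ t ∈ Finset.univ.filter (fun t => p t = (i : ℝ) / N), (y t - (i : ℝ) / N)|

open Finset

theorem apply_eq_add_sub_mul_of_eq_zero_or_eq_one (f : ℝ → ℝ) {y : ℝ} (hy : y = 0 ∨ y = 1)
    (a : ℝ) : f y = (a * f 1 + (1 - a) * f 0) + (y - a) * (f 1 - f 0) := by
  rcases hy with rfl | rfl <;> ring

theorem sum_apply_eq_card_mul_add_bias_mul {ι : Type*} (s : Finset ι) (y : ι → ℝ)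
    (hy : ∀ t ∈ s, y t = 0 ∨ y t = 1) (f : ℝ → ℝ) (a : ℝ) :
    ∑ t ∈ s, f (y t)
      = #s * (a * f 1 + (1 - a) * f 0) + (∑ t ∈ s, (y t - a)) * (f 1 - f 0) := by
  rw [sum_congr rfl fun t ht => apply_eq_add_sub_mul_of_eq_zero_or_eq_one f (hy t ht) a,
    sum_add_distrib, sum_const, nsmul_eq_mul, sum_mul]

theorem natCast_div_mem_Icc {i N : ℕ} (hi : i ≤ N) : (i : ℝ) / N ∈ Set.Icc (0 : ℝ) 1 :=
  ⟨by positivity, div_le_one_of_le₀ (by exact_mod_cast hi) (Nat.cast_nonneg N)⟩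

theorem abs_bin_bias_le_mul_calErrL1 {T N i : ℕ} (hi : i ∈ range (N + 1)) (p y : Fin T → ℝ) :
    |∑ t ∈ univ.filter (fun t => p t = (i : ℝ) / N), (y t - (i : ℝ) / N)|
      ≤ T * calErrL1 T N p y := by
  rcases Nat.eq_zero_or_pos T with rfl | hT
  · simp
  · rw [calErrL1, ← mul_assoc, mul_one_div_cancel (by positivity), one_mul]
    exact single_le_sum (f := fun k : ℕ =>
      |∑ t ∈ univ.filter (fun t => p t = (k : ℝ) / N), (y t - (k : ℝ) / N)|)
      (fun _ _ => abs_nonneg _) hi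

theorem stmt1_general (T N : ℕ) (y p : Fin T → ℝ)
    (hy : ∀ t, y t = 0 ∨ y t = 1)
    (ℓ : ℝ → ℝ → ℝ) (B : ℝ)
    (hproper : ∀ p' ∈ Set.Icc (0:ℝ) 1, ∀ q ∈ Set.Icc (0:ℝ) 1,
      p' * ℓ 1 p' + (1 - p') * ℓ 0 p' ≤ p' * ℓ 1 q + (1 - p') * ℓ 0 q)
    (hbound : ∀ y' ∈ ({0, 1} : Set ℝ), ∀ q ∈ Set.Icc (0:ℝ) 1,
      0 ≤ ℓ y' q ∧ ℓ y' q ≤ B) :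
    ∀ i ∈ Finset.range (N + 1), ∀ j ∈ Finset.range (N + 1),
      ∑ t ∈ Finset.univ.filter (fun t => p t = (i : ℝ) / N),
          (ℓ (y t) ((i : ℝ) / N) - ℓ (y t) ((j : ℝ) / N))
        ≤ 2 * B * (T : ℝ) * calErrL1 T N p y := by
  intro i hi j hj
  set α : ℝ := (i : ℝ) / N
  set β : ℝ := (j : ℝ) / N
  have hα := natCast_div_mem_Icc (Nat.lt_succ_iff.mp (mem_range.mp hi))
  have hβ := natCast_div_mem_Icc (Nat.lt_succ_iff.mp (mem_range.mp hj))
  have hregret : α * (ℓ 1 α - ℓ 1 β) + (1 - α) * (ℓ 0 α - ℓ 0 β) ≤ 0 := by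
    linarith [hproper α hα β hβ]
  have hspread : |(ℓ 1 α - ℓ 1 β) - (ℓ 0 α - ℓ 0 β)| ≤ 2 * B := by
    obtain ⟨h1α, h1α'⟩ := hbound 1 (by simp) α hα
    obtain ⟨h1β, h1β'⟩ := hbound 1 (by simp) β hβ
    obtain ⟨h0α, h0α'⟩ := hbound 0 (by simp) α hα
    obtain ⟨h0β, h0β'⟩ := hbound 0 (by simp) β hβ
    exact abs_le.2 ⟨by linarith, by linarith⟩
  have hbias := abs_bin_bias_le_mul_calErrL1 hi p y
  rw [sum_apply_eq_card_mul_add_bias_mul _ y (fun t _ => hy t) (fun z => ℓ z α - ℓ z β) α]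
  calc _ ≤ 0 + |∑ t ∈ univ.filter (fun t => p t = α), (y t - α)|
          * |(ℓ 1 α - ℓ 1 β) - (ℓ 0 α - ℓ 0 β)| :=
        add_le_add (mul_nonpos_of_nonneg_of_nonpos (Nat.cast_nonneg _) hregret)
          ((le_abs_self _).trans (abs_mul _ _).le)
    _ ≤ 0 + T * calErrL1 T N p y * (2 * B) := by
        gcongr
        exact (abs_nonneg _).trans hbias
    _ = 2 * B * T * calErrL1 T N p y := by ring

/-- For a proper loss bounded by `B` and forecasts on the grid
`{i/N : i = 0,…,N}`, the internal regret of every pair `(i, j)` is at most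
`2·B·T·C_T^1`. -/
theorem stmt1 (T N : ℕ) (hN : 1 ≤ N) (y p : Fin T → ℝ)
    (hy : ∀ t, y t = 0 ∨ y t = 1)
    (hp : ∀ t, ∃ i ∈ Finset.range (N + 1), p t = (i : ℝ) / N)
    (ℓ : ℝ → ℝ → ℝ) (B : ℝ)
    (hproper : ∀ p' ∈ Set.Icc (0:ℝ) 1, ∀ q ∈ Set.Icc (0:ℝ) 1,
      p' * ℓ 1 p' + (1 - p') * ℓ 0 p' ≤ p' * ℓ 1 q + (1 - p') * ℓ 0 q)
    (hbound : ∀ y' ∈ ({0, 1} : Set ℝ), ∀ q ∈ Set.Icc (0:ℝ) 1,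
      0 ≤ ℓ y' q ∧ ℓ y' q ≤ B) :
    ∀ i ∈ Finset.range (N + 1), ∀ j ∈ Finset.range (N + 1),
      ∑ t ∈ Finset.univ.filter (fun t => p t = (i : ℝ) / N),
          (ℓ (y t) ((i : ℝ) / N) - ℓ (y t) ((j : ℝ) / N))
        ≤ 2 * B * (T : ℝ) * calErrL1 T N p y :=
  stmt1_general T N y p hy ℓ B hproper hbound
end

section
/- Let ℓ : {0,1} × [0,1] → ℝ be a proper loss bounded by B, let N ≥ 1, and let y_1,…,y_T ∈ {0,1} be outcomes with forecasts p_1,…,p_T taking values in the grid G_N = {i/N : i = 0,…,N}. Then for every q ∈ [0,1]: (1/T) Σ_{t=1}^T ℓ(y_t, p_t) ≤ (1/T) Σ_{t=1}^T ℓ(y_t, q) + 2·B·C_T^1, where C_T^1 is the ℓ1 calibration error of the forecasts. In particular, a calibrated predictor is at least as accurate as any constant predictor, up to 2·B·C_T^1. -/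
open scoped BigOperators Classical

/-!
Group the rounds into bins according to the forecast. In a bin with forecast `π` containing `n`
rounds, the total loss at any prediction `r` equals `n` times the expected loss of `r` under
outcome probability `π`, plus the bin's calibration deviation `d = ∑ (y t - π)` times
`ℓ 1 r - ℓ 0 r`. Properness makes the first part minimal at `r = π`, and boundedness makes the
second part change by at most `2 B |d|` when `r` moves from `π` to `q`. Summing over bins gives
the theorem.
-/

open Finset

theorem Finset.sum_filter_grid_eq_sum {ι κ β M : Type*} [DecidableEq β] [AddCommMonoid M]
    {s : Finset ι} {I : Finset κ} {v : κ → β} {p : ι → β} (hv : Set.InjOn v I)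
    (hp : ∀ t ∈ s, ∃ i ∈ I, p t = v i) (f : ι → M) :
    ∑ i ∈ I, ∑ t ∈ s with p t = v i, f t = ∑ t ∈ s, f t := by
  rw [← Finset.sum_image (g := v) (f := fun x => ∑ t ∈ s with p t = x, f t) hv]
  refine Finset.sum_fiberwise_of_maps_to (fun t ht => ?_) f
  obtain ⟨i, hi, hpi⟩ := hp t ht
  exact hpi ▸ Finset.mem_image_of_mem v hi

theorem injOn_natCast_div_range (N : ℕ) :
    Set.InjOn (fun i : ℕ => (i : ℝ) / N) (Finset.range (N + 1)) := by
  intro i hi j hj hij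
  rcases Nat.eq_zero_or_pos N with rfl | hN
  · simp_all
  · have : (N : ℝ) ≠ 0 := by positivity
    exact_mod_cast (div_left_inj' this).mp hij

section BinaryLoss

variable {ι : Type*} (ℓ : ℝ → ℝ → ℝ) {S : Finset ι} {y : ι → ℝ}

theorem sum_loss_eq_card_mul_add (hy : ∀ t ∈ S, y t = 0 ∨ y t = 1) (π r : ℝ) :
    ∑ t ∈ S, ℓ (y t) r = #S * (π * ℓ 1 r + (1 - π) * ℓ 0 r)
      + (∑ t ∈ S, (y t - π)) * (ℓ 1 r - ℓ 0 r) := by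
  have hterm : ∀ t ∈ S,
      ℓ (y t) r = (π * ℓ 1 r + (1 - π) * ℓ 0 r) + (y t - π) * (ℓ 1 r - ℓ 0 r) := by
    intro t ht
    rcases hy t ht with h | h <;> rw [h] <;> ring
  rw [Finset.sum_congr rfl hterm, Finset.sum_add_distrib, Finset.sum_const, nsmul_eq_mul,
    Finset.sum_mul]

variable {ℓ} {B : ℝ}
  (hproper : ∀ p' ∈ Set.Icc (0:ℝ) 1, ∀ q ∈ Set.Icc (0:ℝ) 1,
    p' * ℓ 1 p' + (1 - p') * ℓ 0 p' ≤ p' * ℓ 1 q + (1 - p') * ℓ 0 q)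
  (hbound : ∀ y' ∈ ({0, 1} : Set ℝ), ∀ q ∈ Set.Icc (0:ℝ) 1, 0 ≤ ℓ y' q ∧ ℓ y' q ≤ B)
include hproper hbound

theorem sum_loss_le_add_two_mul_abs_sum_sub (hy : ∀ t ∈ S, y t = 0 ∨ y t = 1) {π q : ℝ}
    (hπ : π ∈ Set.Icc (0:ℝ) 1) (hq : q ∈ Set.Icc (0:ℝ) 1) :
    ∑ t ∈ S, ℓ (y t) π ≤ ∑ t ∈ S, ℓ (y t) q + 2 * B * |∑ t ∈ S, (y t - π)| := by
  set d := ∑ t ∈ S, (y t - π)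
  have hexpected := mul_le_mul_of_nonneg_left (hproper π hπ q hq) (Nat.cast_nonneg #S)
  have hdiff : |(ℓ 1 π - ℓ 0 π) - (ℓ 1 q - ℓ 0 q)| ≤ 2 * B := by
    have h1π := hbound 1 (by simp) π hπ
    have h0π := hbound 0 (by simp) π hπ
    have h1q := hbound 1 (by simp) q hq
    have h0q := hbound 0 (by simp) q hq
    rw [abs_le]
    constructor <;> linarith
  have hdev : d * ((ℓ 1 π - ℓ 0 π) - (ℓ 1 q - ℓ 0 q)) ≤ 2 * B * |d| :=
    calc d * ((ℓ 1 π - ℓ 0 π) - (ℓ 1 q - ℓ 0 q))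
        ≤ |d| * |(ℓ 1 π - ℓ 0 π) - (ℓ 1 q - ℓ 0 q)| := by rw [← abs_mul]; exact le_abs_self _
      _ ≤ |d| * (2 * B) := mul_le_mul_of_nonneg_left hdiff (abs_nonneg d)
      _ = 2 * B * |d| := mul_comm _ _
  rw [sum_loss_eq_card_mul_add ℓ hy π π, sum_loss_eq_card_mul_add ℓ hy π q]
  linarith

end BinaryLoss

theorem stmt3_general (T N : ℕ) (y p : Fin T → ℝ)
    (hy : ∀ t, y t = 0 ∨ y t = 1)
    (hp : ∀ t, ∃ i ∈ Finset.range (N + 1), p t = (i : ℝ) / N)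
    (ℓ : ℝ → ℝ → ℝ) (B : ℝ)
    (hproper : ∀ p' ∈ Set.Icc (0:ℝ) 1, ∀ q ∈ Set.Icc (0:ℝ) 1,
      p' * ℓ 1 p' + (1 - p') * ℓ 0 p' ≤ p' * ℓ 1 q + (1 - p') * ℓ 0 q)
    (hbound : ∀ y' ∈ ({0, 1} : Set ℝ), ∀ q ∈ Set.Icc (0:ℝ) 1,
      0 ≤ ℓ y' q ∧ ℓ y' q ≤ B) :
    ∀ q ∈ Set.Icc (0:ℝ) 1,
      (1 / (T : ℝ)) * ∑ t, ℓ (y t) (p t)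
        ≤ (1 / (T : ℝ)) * ∑ t, ℓ (y t) q + 2 * B * calErrL1 T N p y := by
  intro q hq
  have hpart (f : Fin T → ℝ) := Finset.sum_filter_grid_eq_sum (injOn_natCast_div_range N)
    (s := univ) (fun t _ => hp t) f
  have hbin : ∀ i ∈ Finset.range (N + 1),
      ∑ t with p t = (i : ℝ) / N, ℓ (y t) (p t)
        ≤ ∑ t with p t = (i : ℝ) / N, ℓ (y t) q
          + 2 * B * |∑ t with p t = (i : ℝ) / N, (y t - (i : ℝ) / N)| := by
    intro i hi
    have hπ : (i : ℝ) / N ∈ Set.Icc (0:ℝ) 1 :=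
      ⟨by positivity, div_le_one_of_le₀ (by exact_mod_cast Finset.mem_range_succ_iff.mp hi)
        (Nat.cast_nonneg N)⟩
    rw [Finset.sum_congr rfl fun t ht => by rw [(Finset.mem_filter.mp ht).2]]
    exact sum_loss_le_add_two_mul_abs_sum_sub hproper hbound (fun t _ => hy t) hπ hq
  have htotal := Finset.sum_le_sum hbin
  rw [Finset.sum_add_distrib, ← Finset.mul_sum, hpart, hpart] at htotal
  rw [calErrL1, ← mul_assoc, mul_comm (2 * B), mul_assoc, ← mul_add]
  exact mul_le_mul_of_nonneg_left htotal (by positivity)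

/-- For a proper loss bounded by `B` and forecasts on the grid
`{i/N : i = 0,…,N}`, the average loss of the forecasts exceeds the average loss
of any constant prediction `q ∈ [0,1]` by at most `2·B·C_T^1`. -/
theorem stmt3 (T N : ℕ) (hN : 1 ≤ N) (y p : Fin T → ℝ)
    (hy : ∀ t, y t = 0 ∨ y t = 1)
    (hp : ∀ t, ∃ i ∈ Finset.range (N + 1), p t = (i : ℝ) / N)
    (ℓ : ℝ → ℝ → ℝ) (B : ℝ)
    (hproper : ∀ p' ∈ Set.Icc (0:ℝ) 1, ∀ q ∈ Set.Icc (0:ℝ) 1,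
      p' * ℓ 1 p' + (1 - p') * ℓ 0 p' ≤ p' * ℓ 1 q + (1 - p') * ℓ 0 q)
    (hbound : ∀ y' ∈ ({0, 1} : Set ℝ), ∀ q ∈ Set.Icc (0:ℝ) 1,
      0 ≤ ℓ y' q ∧ ℓ y' q ≤ B) :
    ∀ q ∈ Set.Icc (0:ℝ) 1,
      (1 / (T : ℝ)) * ∑ t, ℓ (y t) (p t)
        ≤ (1 / (T : ℝ)) * ∑ t, ℓ (y t) q + 2 * B * calErrL1 T N p y :=
  stmt3_general T N y p hy hp ℓ B hproper hbound
end

section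
/- Let N ≥ 1, let r ≥ 1 be a real number, and let y_1,…,y_T ∈ {0,1} be outcomes with forecasts p_1,…,p_T taking values in the grid G_N = {i/N : i = 0,…,N}. Suppose the index set {1,…,T} is partitioned into M nonempty groups S_1,…,S_M with |S_j| = T_j. For a set S of times, let n_i(S) = #{t ∈ S : p_t = i/N}, ρ_i(S) = (Σ_{t ∈ S : p_t = i/N} y_t)/n_i(S) when n_i(S) > 0, and let the ℓr calibration error over S be C^r(S) = Σ_{i : n_i(S) > 0} |ρ_i(S) − i/N|^r · (n_i(S)/|S|). Then C^r({1,…,T}) ≤ Σ_{j=1}^M (T_j/T) · C^r(S_j). -/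
/-! For each forecast level `i`, the frequency `ρ_i` over all times is the average of the
group frequencies `ρ_i(S_j)` weighted by `n_i(S_j)`, so Jensen's inequality for the convex
function `x ↦ |x - i/N| ^ r` gives
`n_i · |ρ_i - i/N| ^ r ≤ ∑_j n_i(S_j) · |ρ_i(S_j) - i/N| ^ r`.
Summing over `i` and dividing by `T` yields the claim, because
`T_j · C^r(S_j) = ∑_i n_i(S_j) · |ρ_i(S_j) - i/N| ^ r`. -/

open scoped BigOperators Classical

/-- `n_i(S)`: the number of times `t ∈ S` at which `i/N` was forecast. -/
noncomputable def nOn (T N : ℕ) (p : Fin T → ℝ) (S : Finset (Fin T)) (i : ℕ) : ℕ :=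
  (S.filter (fun t => p t = (i : ℝ) / N)).card

/-- `ρ_i(S)`: the empirical frequency of outcome 1 over the times `t ∈ S`
at which `i/N` was forecast. -/
noncomputable def rhoOn (T N : ℕ) (p y : Fin T → ℝ) (S : Finset (Fin T)) (i : ℕ) : ℝ :=
  (∑ t ∈ S.filter (fun t => p t = (i : ℝ) / N), y t) / (nOn T N p S i : ℝ)

/-- The ℓr calibration error over `S`:
`C^r(S) = ∑_{i : n_i(S) > 0} |ρ_i(S) − i/N|^r · (n_i(S)/|S|)` (real exponent `r`). -/
noncomputable def calErrROn (T N : ℕ) (r : ℝ) (p y : Fin T → ℝ) (S : Finset (Fin T)) : ℝ :=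
  ∑ i ∈ (Finset.range (N + 1)).filter (fun i => 0 < nOn T N p S i),
    |rhoOn T N p y S i - (i : ℝ) / N| ^ r * ((nOn T N p S i : ℝ) / (S.card : ℝ))

theorem convexOn_dist_rpow {E : Type*} [NormedAddCommGroup E] [NormedSpace ℝ E] (c : E)
    {r : ℝ} (hr : 1 ≤ r) : ConvexOn ℝ Set.univ fun x => dist x c ^ r := by
  refine ⟨convex_univ, fun x _ y _ a b ha hb hab => ?_⟩
  calc dist (a • x + b • y) c ^ r ≤ (a * dist x c + b * dist y c) ^ r := by
        gcongr; exact (convexOn_univ_dist c).2 trivial trivial ha hb hab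
    _ ≤ a • dist x c ^ r + b • dist y c ^ r :=
        (convexOn_rpow hr).2 dist_nonneg dist_nonneg ha hb hab

theorem ConvexOn.map_sum_div_sum_mul_sum_le {ι : Type*} (s : Finset ι) {f : ℝ → ℝ}
    (hf : ConvexOn ℝ Set.univ f) {n Y : ι → ℝ} (hn : ∀ j ∈ s, 0 ≤ n j)
    (hY : ∀ j ∈ s, n j = 0 → Y j = 0) (hpos : 0 < ∑ j ∈ s, n j) :
    f ((∑ j ∈ s, Y j) / ∑ j ∈ s, n j) * ∑ j ∈ s, n j ≤ ∑ j ∈ s, f (Y j / n j) * n j := by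
  have hweighted : ∀ j ∈ s, n j • (Y j / n j) = Y j := fun j hj => by
    rcases eq_or_ne (n j) 0 with h | h
    · simp [h, hY j hj h]
    · exact mul_div_cancel₀ _ h
  have := hf.map_centerMass_le hn hpos fun j _ => Set.mem_univ (Y j / n j)
  rw [Finset.centerMass, Finset.centerMass, Finset.sum_congr rfl hweighted, smul_eq_mul,
    inv_mul_eq_div, smul_eq_mul, inv_mul_eq_div, le_div_iff₀ hpos] at this
  simpa only [Function.comp_apply, smul_eq_mul, mul_comm (n _)] using this

theorem Finset.sum_univ_eq_sum_sum_of_partition {ι α β : Type*} [Fintype ι] [Fintype α]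
    [AddCommMonoid β] (S : ι → Finset α) (hdisj : ∀ j k, j ≠ k → Disjoint (S j) (S k))
    (hcover : ∀ t, ∃ j, t ∈ S j) (f : α → β) :
    ∑ t, f t = ∑ j, ∑ t ∈ S j, f t := by
  rw [← Finset.sum_biUnion fun j _ k _ hjk => hdisj j k hjk]
  congr
  ext t
  simpa using hcover t

section Calibration

variable {T N : ℕ} {r : ℝ} {p y : Fin T → ℝ}

theorem calErrROn_eq_sum_div (S : Finset (Fin T)) :
    calErrROn T N r p y S
      = (∑ i ∈ Finset.range (N + 1),
          |rhoOn T N p y S i - (i : ℝ) / N| ^ r * nOn T N p S i) / S.card := by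
  rw [calErrROn, Finset.sum_div, Finset.sum_filter]
  refine Finset.sum_congr rfl fun i _ => ?_
  split_ifs with h
  · ring
  · simp [Nat.eq_zero_of_not_pos h]

theorem card_mul_calErrROn (S : Finset (Fin T)) :
    S.card * calErrROn T N r p y S
      = ∑ i ∈ Finset.range (N + 1), |rhoOn T N p y S i - (i : ℝ) / N| ^ r * nOn T N p S i := by
  rw [calErrROn_eq_sum_div]
  rcases S.eq_empty_or_nonempty with rfl | hS
  · simp [nOn]
  · exact mul_div_cancel₀ _ (Nat.cast_ne_zero.2 hS.card_pos.ne')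

theorem abs_rhoOn_univ_sub_rpow_mul_nOn_le {M : ℕ} (hr : 1 ≤ r) (S : Fin M → Finset (Fin T))
    (hdisj : ∀ j k, j ≠ k → Disjoint (S j) (S k)) (hcover : ∀ t, ∃ j, t ∈ S j) (i : ℕ) :
    |rhoOn T N p y Finset.univ i - (i : ℝ) / N| ^ r * nOn T N p Finset.univ i
      ≤ ∑ j, |rhoOn T N p y (S j) i - (i : ℝ) / N| ^ r * nOn T N p (S j) i := by
  have hsplit (f : Fin T → ℝ) :
      ∑ t ∈ Finset.univ.filter (fun t => p t = (i : ℝ) / N), f t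
        = ∑ j, ∑ t ∈ (S j).filter (fun t => p t = (i : ℝ) / N), f t := by
    simp only [Finset.sum_filter]
    exact Finset.sum_univ_eq_sum_sum_of_partition S hdisj hcover _
  have hn : (nOn T N p Finset.univ i : ℝ) = ∑ j, (nOn T N p (S j) i : ℝ) := by
    simpa [nOn] using hsplit fun _ => 1
  rcases (nOn T N p Finset.univ i).eq_zero_or_pos with h0 | hpos
  · rw [h0, Nat.cast_zero, mul_zero]
    exact Finset.sum_nonneg fun j _ => by positivity
  have hY (j : Fin M) (h : (nOn T N p (S j) i : ℝ) = 0) :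
      ∑ t ∈ (S j).filter (fun t => p t = (i : ℝ) / N), y t = 0 := by
    rw [Finset.card_eq_zero.1 (Nat.cast_eq_zero.1 h), Finset.sum_empty]
  have := (convexOn_dist_rpow ((i : ℝ) / N) hr).map_sum_div_sum_mul_sum_le Finset.univ
    (fun j _ => Nat.cast_nonneg _) (fun j _ => hY j) (hn ▸ Nat.cast_pos.2 hpos)
  simpa only [rhoOn, hn, hsplit y, Real.dist_eq] using this

end Calibration

theorem stmt5_general (T N M : ℕ) (r : ℝ) (hr : 1 ≤ r) (y p : Fin T → ℝ)
    (S : Fin M → Finset (Fin T))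
    (hdisj : ∀ j k, j ≠ k → Disjoint (S j) (S k))
    (hcover : ∀ t, ∃ j, t ∈ S j) :
    calErrROn T N r p y Finset.univ
      ≤ ∑ j, (((S j).card : ℝ) / (T : ℝ)) * calErrROn T N r p y (S j) :=
  calc calErrROn T N r p y Finset.univ
      = (∑ i ∈ Finset.range (N + 1),
          |rhoOn T N p y Finset.univ i - (i : ℝ) / N| ^ r * nOn T N p Finset.univ i) / T := by
        rw [calErrROn_eq_sum_div, Finset.card_univ, Fintype.card_fin]
    _ ≤ (∑ i ∈ Finset.range (N + 1), ∑ j,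
          |rhoOn T N p y (S j) i - (i : ℝ) / N| ^ r * nOn T N p (S j) i) / T := by
        gcongr with i
        exact abs_rhoOn_univ_sub_rpow_mul_nOn_le hr S hdisj hcover i
    _ = ∑ j, (((S j).card : ℝ) / (T : ℝ)) * calErrROn T N r p y (S j) := by
        rw [Finset.sum_comm, Finset.sum_div]
        simp only [div_mul_eq_mul_div, card_mul_calErrROn]

/-- For any real `r ≥ 1`, if the times `{1,…,T}` are partitioned into `M`
nonempty groups `S_1,…,S_M`, the ℓr calibration error of the full sequence is at most
the weighted average `∑_j (T_j/T)·C^r(S_j)` of the per-group ℓr calibration errors. -/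
theorem stmt5 (T N M : ℕ) (hN : 1 ≤ N) (r : ℝ) (hr : 1 ≤ r) (y p : Fin T → ℝ)
    (hy : ∀ t, y t = 0 ∨ y t = 1)
    (hp : ∀ t, ∃ i ∈ Finset.range (N + 1), p t = (i : ℝ) / N)
    (S : Fin M → Finset (Fin T))
    (hne : ∀ j, (S j).Nonempty)
    (hdisj : ∀ j k, j ≠ k → Disjoint (S j) (S k))
    (hcover : ∀ t, ∃ j, t ∈ S j) :
    calErrROn T N r p y Finset.univ
      ≤ ∑ j, (((S j).card : ℝ) / (T : ℝ)) * calErrROn T N r p y (S j) :=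
  stmt5_general T N M r hr y p S hdisj hcover
end

section
/- Let ℓ : {0,1} × [0,1] → ℝ be a proper loss bounded by B and let N ≥ 1. Suppose ℓ satisfies: for all y ∈ {0,1}, all j ∈ {0,…,N−1}, and all p ∈ [j/N, (j+1)/N): |ℓ(y, p) − ℓ(y, j/N)| ≤ B/N. Let y_1,…,y_T ∈ {0,1} be outcomes, let p^F_1,…,p^F_T ∈ [0,1) be raw forecasts, and partition {1,…,T} into groups S_0,…,S_{N−1} where S_j = {t : p^F_t ∈ [j/N, (j+1)/N)}, with T_j = |S_j|. Let p_1,…,p_T be recalibrated forecasts taking values in the grid G_N = {i/N : i = 0,…,N}, and suppose for each nonempty S_j the ℓ1 calibration error of the pairs {(p_t, y_t) : t ∈ S_j} (normalized by 1/T_j) is at most ε_j. Then (1/T) Σ_{t=1}^T ℓ(y_t, p_t) − (1/T) Σ_{t=1}^T ℓ(y_t, p^F_t) ≤ B/N + 2·B·Σ_{j : T_j > 0} (T_j/T)·ε_j. -/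
open scoped BigOperators Classical

/-- The ℓ1 calibration error over a set `S` of times, normalized by `|S|`:
`(1/|S|) · ∑_{i=0}^N |∑_{t ∈ S : p_t = i/N} (y_t − i/N)|`. -/
noncomputable def calErrL1On (T N : ℕ) (p y : Fin T → ℝ) (S : Finset (Fin T)) : ℝ :=
  (1 / (S.card : ℝ)) * ∑ i ∈ Finset.range (N + 1),
    |∑ t ∈ S.filter (fun t => p t = (i : ℝ) / N), (y t - (i : ℝ) / N)|

/-- The bucket `S_j = {t : p^F_t ∈ [j/N, (j+1)/N)}` of times whose raw forecast
falls in the `j`-th grid interval. -/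
noncomputable def bucket (T N : ℕ) (pF : Fin T → ℝ) (j : ℕ) : Finset (Fin T) :=
  Finset.univ.filter (fun t => pF t ∈ Set.Ico ((j : ℝ) / N) (((j : ℝ) + 1) / N))

/-! On the bucket `S_j` the recalibrated forecasts are compared with the constant forecast `j/N`.
For a binary outcome, `ℓ(y, q) = (a ℓ(1,q) + (1-a) ℓ(0,q)) + (y - a)(ℓ(1,q) - ℓ(0,q))`, so on the
times where the recalibrated forecast equals `a`, properness leaves only the bias `∑ (y_t - a)` to
be exploited by another constant forecast, at a price of at most `2B |∑ (y_t - a)|`. Summing over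
`a` gives `2B` times the calibration error of `S_j`, and `j/N` is within `B/N` of the raw
forecasts on `S_j`. -/

open Finset

section BinaryLoss

variable {ι : Type*} (ℓ : ℝ → ℝ → ℝ) {y : ι → ℝ}

lemma loss_eq_of_binary {y' : ℝ} (hy' : y' = 0 ∨ y' = 1) (a q : ℝ) :
    ℓ y' q = (a * ℓ 1 q + (1 - a) * ℓ 0 q) + (y' - a) * (ℓ 1 q - ℓ 0 q) := by
  rcases hy' with rfl | rfl <;> ring

lemma sum_loss_eq_of_binary (hy : ∀ t, y t = 0 ∨ y t = 1) (A : Finset ι) (a q : ℝ) :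
    ∑ t ∈ A, ℓ (y t) q
      = #A * (a * ℓ 1 q + (1 - a) * ℓ 0 q) + (∑ t ∈ A, (y t - a)) * (ℓ 1 q - ℓ 0 q) := by
  rw [sum_congr rfl fun t _ => loss_eq_of_binary ℓ (hy t) a q, sum_add_distrib, sum_const,
    nsmul_eq_mul, sum_mul]

lemma sum_loss_le_of_proper (hy : ∀ t, y t = 0 ∨ y t = 1) (A : Finset ι) {B a b : ℝ}
    (hproper : a * ℓ 1 a + (1 - a) * ℓ 0 a ≤ a * ℓ 1 b + (1 - a) * ℓ 0 b)
    (ha : |ℓ 1 a - ℓ 0 a| ≤ B) (hb : |ℓ 1 b - ℓ 0 b| ≤ B) :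
    ∑ t ∈ A, ℓ (y t) a ≤ ∑ t ∈ A, ℓ (y t) b + 2 * B * |∑ t ∈ A, (y t - a)| := by
  rw [sum_loss_eq_of_binary ℓ hy A a a, sum_loss_eq_of_binary ℓ hy A a b]
  set d := ∑ t ∈ A, (y t - a)
  have hexpected := mul_le_mul_of_nonneg_left hproper (Nat.cast_nonneg (α := ℝ) #A)
  have hbias : d * ((ℓ 1 a - ℓ 0 a) - (ℓ 1 b - ℓ 0 b)) ≤ 2 * B * |d| :=
    calc d * ((ℓ 1 a - ℓ 0 a) - (ℓ 1 b - ℓ 0 b))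
        ≤ |d| * |(ℓ 1 a - ℓ 0 a) - (ℓ 1 b - ℓ 0 b)| := by rw [← abs_mul]; exact le_abs_self _
      _ ≤ |d| * (2 * B) := by gcongr; linarith [abs_sub (ℓ 1 a - ℓ 0 a) (ℓ 1 b - ℓ 0 b)]
      _ = 2 * B * |d| := mul_comm _ _
  linarith

lemma sum_loss_le_add_calibration (hy : ∀ t, y t = 0 ∨ y t = 1) (A : Finset ι) {B : ℝ}
    (hproper : ∀ p' ∈ Set.Icc (0:ℝ) 1, ∀ q ∈ Set.Icc (0:ℝ) 1,
      p' * ℓ 1 p' + (1 - p') * ℓ 0 p' ≤ p' * ℓ 1 q + (1 - p') * ℓ 0 q)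
    (hgap : ∀ q ∈ Set.Icc (0:ℝ) 1, |ℓ 1 q - ℓ 0 q| ≤ B)
    {G : Finset ℝ} (hG : ∀ a ∈ G, a ∈ Set.Icc (0:ℝ) 1) {p : ι → ℝ} (hpG : ∀ t ∈ A, p t ∈ G)
    {b : ℝ} (hb : b ∈ Set.Icc (0:ℝ) 1) :
    ∑ t ∈ A, ℓ (y t) (p t)
      ≤ ∑ t ∈ A, ℓ (y t) b + 2 * B * ∑ a ∈ G, |∑ t ∈ A with p t = a, (y t - a)| := by
  rw [← sum_fiberwise_of_maps_to hpG, ← sum_fiberwise_of_maps_to hpG, mul_sum,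
    ← sum_add_distrib]
  refine sum_le_sum fun a ha => ?_
  rw [sum_congr rfl fun t ht => by rw [(mem_filter.mp ht).2]]
  exact sum_loss_le_of_proper ℓ hy _ (hproper a (hG a ha) b hb) (hgap a (hG a ha)) (hgap b hb)

end BinaryLoss

noncomputable def grid (N : ℕ) : Finset ℝ := (range (N + 1)).image fun i : ℕ => (i : ℝ) / N

lemma mem_Icc_of_mem_grid {N : ℕ} {a : ℝ} (ha : a ∈ grid N) : a ∈ Set.Icc (0:ℝ) 1 := by
  obtain ⟨i, hi, rfl⟩ := mem_image.mp ha
  have hiN : (i : ℝ) ≤ N := by exact_mod_cast Nat.lt_succ_iff.mp (mem_range.mp hi)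
  exact ⟨by positivity, div_le_one_of_le₀ hiN (Nat.cast_nonneg N)⟩

lemma card_mul_calErrL1On {T N : ℕ} (hN : N ≠ 0) (p y : Fin T → ℝ) (S : Finset (Fin T)) :
    #S * calErrL1On T N p y S = ∑ a ∈ grid N, |∑ t ∈ S with p t = a, (y t - a)| := by
  have hinj : Set.InjOn (fun i : ℕ => (i : ℝ) / N) (range (N + 1)) := fun i _ j _ h => by
    simpa [div_left_inj' (Nat.cast_ne_zero.mpr hN : (N : ℝ) ≠ 0)] using h
  rw [grid, sum_image hinj, calErrL1On]
  rcases S.eq_empty_or_nonempty with rfl | hS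
  · simp
  · rw [← mul_assoc, mul_one_div_cancel (Nat.cast_ne_zero.mpr hS.card_pos.ne'), one_mul]

lemma sum_card_mul_calErrL1On_le {T N : ℕ} (pF p y : Fin T → ℝ) (ε : ℕ → ℝ)
    (hε : ∀ j ∈ range N, (bucket T N pF j).Nonempty → calErrL1On T N p y (bucket T N pF j) ≤ ε j) :
    ∑ j ∈ range N, #(bucket T N pF j) * calErrL1On T N p y (bucket T N pF j)
      ≤ ∑ j ∈ range N with 0 < #(bucket T N pF j), #(bucket T N pF j) * ε j := by
  rw [← sum_filter_of_ne fun j _ h => Nat.cast_pos.mp <|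
    (Nat.cast_nonneg _).lt_of_ne' (left_ne_zero_of_mul h)]
  refine sum_le_sum fun j hj => ?_
  obtain ⟨hjN, hpos⟩ := mem_filter.mp hj
  exact mul_le_mul_of_nonneg_left (hε j hjN (card_pos.mp hpos)) (Nat.cast_nonneg _)

lemma mem_bucket_iff {T N : ℕ} (hN : 0 < N) {pF : Fin T → ℝ} {t : Fin T} (ht : 0 ≤ pF t) (j : ℕ) :
    t ∈ bucket T N pF j ↔ ⌊pF t * N⌋₊ = j := by
  have hN' : (0:ℝ) < N := Nat.cast_pos.mpr hN
  rw [Nat.floor_eq_iff (by positivity), bucket, mem_filter, Set.mem_Ico, div_le_iff₀ hN',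
    lt_div_iff₀ hN']
  simp

lemma sum_eq_sum_bucket {T N : ℕ} (hN : 0 < N) {pF : Fin T → ℝ}
    (hpF : ∀ t, pF t ∈ Set.Ico (0:ℝ) 1) (f : Fin T → ℝ) :
    ∑ t, f t = ∑ j ∈ range N, ∑ t ∈ bucket T N pF j, f t := by
  have hmaps : ∀ t ∈ (univ : Finset (Fin T)), ⌊pF t * N⌋₊ ∈ range N := fun t _ => by
    rw [mem_range, Nat.floor_lt (mul_nonneg (hpF t).1 (Nat.cast_nonneg N))]
    exact mul_lt_of_lt_one_left (Nat.cast_pos.mpr hN) (hpF t).2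
  rw [← sum_fiberwise_of_maps_to hmaps]
  refine sum_congr rfl fun j _ => sum_congr ?_ fun _ _ => rfl
  ext t
  simp [mem_bucket_iff hN (hpF t).1]

section Recalibration

variable {T N : ℕ} {y pF p : Fin T → ℝ} (ℓ : ℝ → ℝ → ℝ) {B : ℝ}

lemma sum_loss_gridPoint_le_add (hy : ∀ t, y t = 0 ∨ y t = 1)
    (hlip : ∀ y' ∈ ({0, 1} : Set ℝ), ∀ j ∈ range N,
      ∀ q ∈ Set.Ico ((j : ℝ) / N) (((j : ℝ) + 1) / N), |ℓ y' q - ℓ y' ((j : ℝ) / N)| ≤ B / N)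
    {j : ℕ} (hj : j ∈ range N) :
    ∑ t ∈ bucket T N pF j, ℓ (y t) ((j : ℝ) / N)
      ≤ ∑ t ∈ bucket T N pF j, ℓ (y t) (pF t) + #(bucket T N pF j) * (B / N) := by
  rw [← nsmul_eq_mul, ← sum_const, ← sum_add_distrib]
  refine sum_le_sum fun t ht => ?_
  have hyt : y t ∈ ({0, 1} : Set ℝ) := by rcases hy t with h | h <;> simp [h]
  linarith [(abs_le.mp (hlip (y t) hyt j hj (pF t) (mem_filter.mp ht).2)).1]

lemma sum_loss_recalibrated_le (hN : 0 < N) (hy : ∀ t, y t = 0 ∨ y t = 1)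
    (hpF : ∀ t, pF t ∈ Set.Ico (0:ℝ) 1) (hp : ∀ t, p t ∈ grid N) (hB : 0 ≤ B)
    (hproper : ∀ p' ∈ Set.Icc (0:ℝ) 1, ∀ q ∈ Set.Icc (0:ℝ) 1,
      p' * ℓ 1 p' + (1 - p') * ℓ 0 p' ≤ p' * ℓ 1 q + (1 - p') * ℓ 0 q)
    (hgap : ∀ q ∈ Set.Icc (0:ℝ) 1, |ℓ 1 q - ℓ 0 q| ≤ B)
    (hlip : ∀ y' ∈ ({0, 1} : Set ℝ), ∀ j ∈ range N,
      ∀ q ∈ Set.Ico ((j : ℝ) / N) (((j : ℝ) + 1) / N), |ℓ y' q - ℓ y' ((j : ℝ) / N)| ≤ B / N)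
    (ε : ℕ → ℝ)
    (hε : ∀ j ∈ range N, (bucket T N pF j).Nonempty →
      calErrL1On T N p y (bucket T N pF j) ≤ ε j) :
    ∑ t, ℓ (y t) (p t) ≤ ∑ t, ℓ (y t) (pF t) + T * (B / N)
      + 2 * B * ∑ j ∈ range N with 0 < #(bucket T N pF j), #(bucket T N pF j) * ε j := by
  have hbucket : ∀ j ∈ range N, ∑ t ∈ bucket T N pF j, ℓ (y t) (p t)
      ≤ ∑ t ∈ bucket T N pF j, ℓ (y t) (pF t) + #(bucket T N pF j) * (B / N)
        + 2 * B * (#(bucket T N pF j) * calErrL1On T N p y (bucket T N pF j)) := fun j hj => by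
    have hjG : (j : ℝ) / N ∈ grid N :=
      mem_image_of_mem _ (mem_range.mpr (Nat.lt_succ_of_lt (mem_range.mp hj)))
    rw [card_mul_calErrL1On hN.ne']
    linarith [sum_loss_gridPoint_le_add ℓ hy hlip (pF := pF) hj,
      sum_loss_le_add_calibration ℓ hy (bucket T N pF j) hproper hgap (fun _ => mem_Icc_of_mem_grid)
        (fun t _ => hp t) (mem_Icc_of_mem_grid hjG)]
  have hT : (T : ℝ) = ∑ j ∈ range N, (#(bucket T N pF j) : ℝ) := by
    simpa using sum_eq_sum_bucket hN hpF fun _ => (1 : ℝ)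
  have hcal := mul_le_mul_of_nonneg_left (sum_card_mul_calErrL1On_le pF p y ε hε)
    (by positivity : (0 : ℝ) ≤ 2 * B)
  have hsum := sum_le_sum hbucket
  rw [sum_add_distrib, sum_add_distrib, ← sum_mul, ← mul_sum, ← hT,
    ← sum_eq_sum_bucket hN hpF, ← sum_eq_sum_bucket hN hpF] at hsum
  linarith

end Recalibration

/-- Lemma 2, recalibration preserves accuracy: if `ℓ` is a proper loss
bounded by `B` varying by at most `B/N` on each grid interval, raw forecasts
`p^F_t ∈ [0,1)` are bucketed into `S_j = {t : p^F_t ∈ [j/N,(j+1)/N)}`, and on each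
nonempty bucket the recalibrated grid-valued forecasts have ℓ1 calibration error at
most `ε_j`, then the average loss of the recalibrated forecasts exceeds that of the
raw forecasts by at most `B/N + 2·B·∑_{j : T_j > 0} (T_j/T)·ε_j`. -/
theorem stmt6 (T N : ℕ) (hN : 1 ≤ N) (y : Fin T → ℝ)
    (hy : ∀ t, y t = 0 ∨ y t = 1)
    (pF : Fin T → ℝ) (hpF : ∀ t, pF t ∈ Set.Ico (0:ℝ) 1)
    (p : Fin T → ℝ) (hp : ∀ t, ∃ i ∈ Finset.range (N + 1), p t = (i : ℝ) / N)
    (ℓ : ℝ → ℝ → ℝ) (B : ℝ)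
    (hproper : ∀ p' ∈ Set.Icc (0:ℝ) 1, ∀ q ∈ Set.Icc (0:ℝ) 1,
      p' * ℓ 1 p' + (1 - p') * ℓ 0 p' ≤ p' * ℓ 1 q + (1 - p') * ℓ 0 q)
    (hbound : ∀ y' ∈ ({0, 1} : Set ℝ), ∀ q ∈ Set.Icc (0:ℝ) 1,
      0 ≤ ℓ y' q ∧ ℓ y' q ≤ B)
    (hlip : ∀ y' ∈ ({0, 1} : Set ℝ), ∀ j ∈ Finset.range N,
      ∀ q ∈ Set.Ico ((j : ℝ) / N) (((j : ℝ) + 1) / N),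
        |ℓ y' q - ℓ y' ((j : ℝ) / N)| ≤ B / N)
    (ε : ℕ → ℝ)
    (hε : ∀ j ∈ Finset.range N, (bucket T N pF j).Nonempty →
      calErrL1On T N p y (bucket T N pF j) ≤ ε j) :
    (1 / (T : ℝ)) * ∑ t, ℓ (y t) (p t) - (1 / (T : ℝ)) * ∑ t, ℓ (y t) (pF t)
      ≤ B / N + 2 * B *
          ∑ j ∈ (Finset.range N).filter (fun j => 0 < (bucket T N pF j).card),
            (((bucket T N pF j).card : ℝ) / (T : ℝ)) * ε j := by
  have hbound0 := hbound 0 (by simp) 0 (by simp)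
  have hB : 0 ≤ B := hbound0.1.trans hbound0.2
  have hgap : ∀ q ∈ Set.Icc (0:ℝ) 1, |ℓ 1 q - ℓ 0 q| ≤ B := fun q hq =>
    abs_sub_le_of_nonneg_of_le (hbound 1 (by simp) q hq).1 (hbound 1 (by simp) q hq).2
      (hbound 0 (by simp) q hq).1 (hbound 0 (by simp) q hq).2
  have hpG : ∀ t, p t ∈ grid N := fun t => by
    obtain ⟨i, hi, h⟩ := hp t
    exact mem_image.mpr ⟨i, hi, h.symm⟩
  have htotal := sum_loss_recalibrated_le ℓ hN hy hpF hpG hB hproper hgap hlip ε hε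
  simp only [div_mul_eq_mul_div, ← sum_div, ← mul_div_assoc, one_mul, ← sub_div]
  rcases Nat.eq_zero_or_pos T with rfl | hT
  · simpa using div_nonneg hB (Nat.cast_nonneg N)
  · rw [div_le_iff₀ (by positivity), add_mul,
      div_mul_cancel₀ _ (by positivity)]
    linarith
end
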